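/- arXiv:1609.08795 — 2 statements merged into one kernel-verified Lean document; each statement's English description precedes it below -/
import Mathlib

section
/- If N is quasiperfect (σ(N) = 2N + 1), then every divisor of σ(N) = 2N + 1 is congruent to 1 or 3 modulo 8. -/
/-- sum-of-divisors function -/
def sigma (n : ℕ) : ℕ := ∑ d ∈ n.divisors, d

lemma sum_pow_two (a : ℕ) : ∑ i ∈ Finset.range (a + 1), 2 ^ i = 2 ^ (a + 1) - 1 := by
  induction a with
  | zero => rfl
  | succ n ih =>
    rw [Finset.sum_range_succ, ih]
    have h1 : 0 < 2 ^ (n + 1) := pow_pos (by norm_num) _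
    rw [pow_succ 2 (n+1)]
    omega

lemma sigma_two_pow (a : ℕ) : sigma (2 ^ a) = 2 ^ (a + 1) - 1 := by
  unfold sigma
  rw [Nat.divisors_prime_pow Nat.prime_two, Finset.sum_map]
  simpa using sum_pow_two a

lemma square_of_odd_sigma (m : ℕ) (hm : 0 < m) (hmo : m % 2 = 1)
    (hs : sigma m % 2 = 1) : ∃ c, m = c * c := by
  have hdodd : ∀ d ∈ m.divisors, d % 2 = 1 := by
    intro d hd
    have hdm : d ∣ m := (Nat.mem_divisors.mp hd).1
    rcases Nat.mod_two_eq_zero_or_one d with h0 | h1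
    · exfalso
      have h2 : 2 ∣ m := dvd_trans (Nat.dvd_of_mod_eq_zero h0) hdm
      omega
    · exact h1
  have h1 : (∑ d ∈ m.divisors, d) % 2 = (∑ d ∈ m.divisors, d % 2) % 2 :=
    Finset.sum_nat_mod _ _ _
  have h2 : ∑ d ∈ m.divisors, d % 2 = m.divisors.card := by
    rw [Finset.sum_congr rfl hdodd]; simp
  have hcard : m.divisors.card % 2 = 1 := by
    unfold sigma at hs; omega
  have heven : ∀ p ∈ m.primeFactors, 2 ∣ m.factorization p := by
    intro p hp
    by_contra hodd2
    have hd2 : 2 ∣ m.factorization p + 1 := by omega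
    have : 2 ∣ m.divisors.card := by
      rw [Nat.card_divisors hm.ne']
      exact dvd_trans hd2 (Finset.dvd_prod_of_mem _ hp)
    omega
  refine ⟨∏ p ∈ m.primeFactors, p ^ (m.factorization p / 2), ?_⟩
  have hprod : m = ∏ p ∈ m.primeFactors, p ^ m.factorization p := by
    conv_lhs => rw [← Nat.factorization_prod_pow_eq_self hm.ne']
    rw [Finsupp.prod, Nat.support_factorization]
  rw [← Finset.prod_mul_distrib]
  conv_lhs => rw [hprod]
  apply Finset.prod_congr rfl
  intro p hp
  rw [← pow_add]
  congr 1
  have := heven p hp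
  omega

lemma exists_prime_mod_four_eq_three :
    ∀ n : ℕ, n % 4 = 3 → ∃ p, p.Prime ∧ p ∣ n ∧ p % 4 = 3 := by
  intro n
  induction n using Nat.strong_induction_on with
  | _ n ih =>
    intro hn
    have hn1 : n ≠ 1 := by omega
    have hp := Nat.minFac_prime hn1
    have hpd : n.minFac ∣ n := Nat.minFac_dvd n
    set p := n.minFac with hpdef
    have hmm : n % 4 % 2 = n % 2 := Nat.mod_mod_of_dvd n (by norm_num)
    have hp2 : p ≠ 2 := by
      intro h2
      rw [h2] at hpd
      omega
    have hpodd : p % 2 = 1 := Nat.odd_iff.mp (hp.odd_of_ne_two hp2)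
    have hpmm : p % 4 % 2 = p % 2 := Nat.mod_mod_of_dvd p (by norm_num)
    have hplt : p % 4 < 4 := Nat.mod_lt _ (by norm_num)
    have hp4 : p % 4 = 1 ∨ p % 4 = 3 := by omega
    rcases hp4 with h1 | h3
    · obtain ⟨k, hk⟩ := hpd
      have hk0 : k ≠ 0 := by rintro rfl; omega
      have hkn : k < n := by
        have : 1 * k < p * k := by
          apply Nat.mul_lt_mul_of_lt_of_le hp.one_lt (le_refl k) (by omega)
        omega
      have hk4 : k % 4 = 3 := by
        have h' : n % 4 = p % 4 * (k % 4) % 4 := by rw [hk, Nat.mul_mod]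
        rw [h1, one_mul, Nat.mod_mod_of_dvd _ (dvd_refl 4)] at h'
        omega
      obtain ⟨q, hq, hqk, hq4⟩ := ih k hkn hk4
      exact ⟨q, hq, hqk.trans ⟨p, by rw [hk, mul_comm]⟩, hq4⟩
    · exact ⟨p, hp, hpd, h3⟩

lemma mod_eight_of_primes :
    ∀ n : ℕ, (∀ p, p.Prime → p ∣ n → p % 8 = 1 ∨ p % 8 = 3) →
      n % 8 = 1 ∨ n % 8 = 3 := by
  intro n
  induction n using Nat.strong_induction_on with
  | _ n ih =>
    intro h
    rcases eq_or_ne n 0 with rfl | hn0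
    · have := h 5 (by norm_num) (dvd_zero 5)
      omega
    rcases eq_or_ne n 1 with rfl | hn1
    · left; rfl
    have hp := Nat.minFac_prime hn1
    have hpd : n.minFac ∣ n := Nat.minFac_dvd n
    set p := n.minFac with hpdef
    obtain ⟨k, hk⟩ := hpd
    have hk0 : k ≠ 0 := by rintro rfl; omega
    have hkn : k < n := by
      have : 1 * k < p * k := by
        apply Nat.mul_lt_mul_of_lt_of_le hp.one_lt (le_refl k) (by omega)
      omega
    have hkh : k % 8 = 1 ∨ k % 8 = 3 := by
      apply ih k hkn
      intro q hq hqk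
      exact h q hq (hqk.trans ⟨p, by rw [hk, mul_comm]⟩)
    have hph : p % 8 = 1 ∨ p % 8 = 3 := h p hp ⟨k, hk⟩
    have h' : n % 8 = p % 8 * (k % 8) % 8 := by rw [hk, Nat.mul_mod]
    rcases hph with h1 | h1 <;> rcases hkh with h2 | h2 <;>
      rw [h1, h2] at h' <;> omega

/-- If N is quasiperfect, every divisor of σ(N) = 2N + 1 is ≡ 1 or 3 (mod 8). -/
theorem quasiperfect_divisors_mod_eight (N : ℕ) (hN : 0 < N)
    (h : sigma N = 2 * N + 1) :
    ∀ d : ℕ, d ∣ 2 * N + 1 → d % 8 = 1 ∨ d % 8 = 3 := by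
  -- decompose N = 2^a * m with m odd
  set a := N.factorization 2 with ha
  set m := N / 2 ^ a with hmdef
  have hNm : 2 ^ a * m = N := Nat.ordProj_mul_ordCompl_eq_self N 2
  have hm2 : ¬ 2 ∣ m := Nat.not_dvd_ordCompl Nat.prime_two hN.ne'
  have hm0 : 0 < m := by
    rcases Nat.eq_zero_or_pos m with h0 | h0
    · exfalso; rw [h0, mul_zero] at hNm; omega
    · exact h0
  have hcop : Nat.Coprime (2 ^ a) m :=
    Nat.Coprime.pow_left a ((Nat.Prime.coprime_iff_not_dvd Nat.prime_two).mpr hm2)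
  have hsig : sigma N = sigma (2 ^ a) * sigma m := by
    conv_lhs => rw [← hNm]
    exact Nat.Coprime.sum_divisors_mul hcop
  have hσmodd : sigma m % 2 = 1 := by
    rcases Nat.mod_two_eq_zero_or_one (sigma m) with h0 | h1
    · exfalso
      obtain ⟨k, hk⟩ := Nat.dvd_of_mod_eq_zero h0
      have : sigma N = 2 * (sigma (2 ^ a) * k) := by rw [hsig, hk]; ring
      omega
    · exact h1
  obtain ⟨c, hc⟩ := square_of_odd_sigma m hm0 (by omega) hσmodd
  -- show N must be an odd square (a = 0)
  have hNsq : N = c * c := by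
    rcases Nat.eq_zero_or_pos a with ha0 | ha1
    · rw [ha0, pow_zero, one_mul] at hNm; omega
    exfalso
    have hs2 : sigma (2 ^ a) = 2 ^ (a + 1) - 1 := sigma_two_pow a
    have hpow : 0 < 2 ^ (a + 1) := pow_pos (by norm_num) _
    have hsdvd : (2 ^ (a + 1) - 1) ∣ 2 * N + 1 := by
      rw [← h, hsig, hs2]; exact Dvd.intro _ rfl
    have h2N : 2 * N + 1 = 2 ^ (a + 1) * (c * c) + 1 := by
      rw [← hNm, hc, pow_succ]; ring
    have hdvd1 : (2 ^ (a + 1) - 1) ∣ (2 ^ (a + 1) - 1) * (c * c) :=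
      Dvd.intro _ rfl
    have hkey : (2 * N + 1) - (2 ^ (a + 1) - 1) * (c * c) = c * c + 1 := by
      rw [h2N, Nat.sub_mul, one_mul]
      have hle : c * c ≤ 2 ^ (a + 1) * (c * c) := Nat.le_mul_of_pos_left _ hpow
      omega
    have hdvd2 : (2 ^ (a + 1) - 1) ∣ c * c + 1 := by
      rw [← hkey]; exact Nat.dvd_sub hsdvd hdvd1
    have hs4 : (2 ^ (a + 1) - 1) % 4 = 3 := by
      have hpa : 2 ^ (a + 1) = 4 * 2 ^ (a - 1) := by
        have : a + 1 = 2 + (a - 1) := by omega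
        rw [this, pow_add]; norm_num
      have : 0 < 2 ^ (a - 1) := pow_pos (by norm_num) _
      omega
    obtain ⟨p, hp, hps, hp4⟩ := exists_prime_mod_four_eq_three _ hs4
    have hpc : p ∣ c * c + 1 := hps.trans hdvd2
    haveI : Fact p.Prime := ⟨hp⟩
    have h0 : ((c * c + 1 : ℕ) : ZMod p) = 0 :=
      (ZMod.natCast_eq_zero_iff _ _).mpr hpc
    push_cast at h0
    have hsqneg : IsSquare (-1 : ZMod p) := ⟨(c : ZMod p), by linear_combination -h0⟩
    exact (ZMod.exists_sq_eq_neg_one_iff.mp hsqneg) hp4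
  -- main argument mod 8
  intro d hd
  apply mod_eight_of_primes
  intro p hp hpd
  have hpN : p ∣ 2 * N + 1 := hpd.trans hd
  have hp2 : p ≠ 2 := by
    rintro rfl
    omega
  haveI : Fact p.Prime := ⟨hp⟩
  have h0 : ((2 * N + 1 : ℕ) : ZMod p) = 0 :=
    (ZMod.natCast_eq_zero_iff _ _).mpr hpN
  rw [hNsq] at h0
  push_cast at h0
  have hsq2 : IsSquare (-2 : ZMod p) :=
    ⟨2 * (c : ZMod p), by linear_combination (-2 : ZMod p) * h0⟩
  exact (ZMod.exists_sq_eq_neg_two_iff hp2).mp hsq2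
end

section
/- For coprime positive integers m, n with m even and n odd satisfying σ(m)σ(n) = (m+n)², write m = 2A², n = B² with A, B odd and coprime; then with N = mn/2 = A²B², the integer σ(N) divides σ(m)σ(n) = (2A²+B²)² and in fact 3·σ(N) = (2A²+B²)², so σ(N) has no prime factor congruent to 5 or 7 modulo 8. -/
lemma sigma_eq_sigma (n : ℕ) : sigma n = ArithmeticFunction.sigma 1 n := by
  simp [sigma, ArithmeticFunction.sigma_apply]

lemma sigma_mul {a b : ℕ} (h : Nat.Coprime a b) : sigma (a * b) = sigma a * sigma b := by
  simp only [sigma_eq_sigma]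
  exact ArithmeticFunction.isMultiplicative_sigma.map_mul_of_coprime h

/-- For coprime m = 2A², n = B² (A, B odd coprime) with m even, n odd and
    σ(m)σ(n) = (m+n)², setting N = mn/2 = A²B² we have
    3σ(N) = (2A²+B²)², and σ(N) has no prime factor ≡ 5 or 7 (mod 8). -/
theorem sigma_N_structure (m n A B N : ℕ) (hm : 0 < m) (hn : 0 < n)
    (hme : Even m) (hno : Odd n) (hcop : Nat.Coprime m n)
    (h : sigma m * sigma n = (m + n) ^ 2)
    (hA : Odd A) (hB : Odd B) (hABcop : Nat.Coprime A B)
    (hmA : m = 2 * A ^ 2) (hnB : n = B ^ 2) (hN : N = A ^ 2 * B ^ 2) :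
    3 * sigma N = (2 * A ^ 2 + B ^ 2) ^ 2 ∧
      ∀ p : ℕ, p.Prime → p ∣ sigma N → p % 8 ≠ 5 ∧ p % 8 ≠ 7 := by
  have hcop2A : Nat.Coprime 2 (A ^ 2) := by
    have : Nat.Coprime 2 A := Nat.coprime_two_left.mpr hA
    exact this.pow_right 2
  have hcopAB2 : Nat.Coprime (A ^ 2) (B ^ 2) := (hABcop.pow_right 2).pow_left 2
  have hsig2 : sigma 2 = 3 := by decide
  have hsm : sigma m = 3 * sigma (A ^ 2) := by
    rw [hmA, sigma_mul hcop2A, hsig2]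
  have hsN : sigma N = sigma (A ^ 2) * sigma (B ^ 2) := by
    rw [hN, sigma_mul hcopAB2]
  have key : 3 * sigma N = (2 * A ^ 2 + B ^ 2) ^ 2 := by
    rw [hsN]
    rw [hmA, hnB, sigma_mul hcop2A, hsig2] at h
    linarith
  refine ⟨key, ?_⟩
  intro p hp hpdvd
  have hpdvd2 : p ∣ (2 * A ^ 2 + B ^ 2) ^ 2 := key ▸ Dvd.dvd.mul_left hpdvd 3
  have hpS : p ∣ 2 * A ^ 2 + B ^ 2 := hp.dvd_of_dvd_pow hpdvd2
  have hodd : Odd (2 * A ^ 2 + B ^ 2) := by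
    rcases hB with ⟨k, hk⟩
    exact ⟨A ^ 2 + 2 * k ^ 2 + 2 * k, by subst hk; ring⟩
  have hp2 : p ≠ 2 := by
    rintro rfl
    obtain ⟨c, hc⟩ := hpS
    obtain ⟨k, hk⟩ := hodd
    omega
  have hpA : ¬ p ∣ A := by
    intro hA'
    have h1 : p ∣ 2 * A ^ 2 := Dvd.dvd.mul_left (hA'.pow two_ne_zero) 2
    have h2 : p ∣ B ^ 2 := (Nat.dvd_add_right h1).mp hpS
    have hB' : p ∣ B := hp.dvd_of_dvd_pow h2
    have hp1 : p = 1 := (hABcop.coprime_dvd_left hA').eq_one_of_dvd hB'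
    exact hp.one_lt.ne' hp1
  haveI : Fact p.Prime := ⟨hp⟩
  have hAz : (A : ZMod p) ≠ 0 := by
    rw [Ne, ZMod.natCast_eq_zero_iff]
    exact hpA
  have hcast : ((2 * A ^ 2 + B ^ 2 : ℕ) : ZMod p) = 0 :=
    (ZMod.natCast_eq_zero_iff _ _).mpr hpS
  push_cast at hcast
  have hsq : IsSquare (-2 : ZMod p) := by
    refine ⟨(B : ZMod p) * (A : ZMod p)⁻¹, ?_⟩
    have hB2 : (B : ZMod p) ^ 2 = -2 * (A : ZMod p) ^ 2 := by linear_combination hcast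
    field_simp
    linear_combination -hB2
  have := (ZMod.exists_sq_eq_neg_two_iff hp2).mp hsq
  omega
end
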